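/- Let C be any collection of languages that is closed under finite variations (if A ∈ C and the symmetric difference A △ B is finite then B ∈ C), under binary unions, and under binary intersections. If there exists an almost C-simple set, then C ≠ co-C, where co-C = { complement of A : A ∈ C }. -/

import Mathlib

/-! Common definitions for resource-bounded immunity and simplicity. -/

open Computability Turing

/-- Binary strings. -/
abbrev Str : Type := List Bool

/-- Self-delimiting encoding of a single string (double each bit, end marker `[false, true]`). -/
def encStr (x : Str) : Str := (x.map fun b => [b, b]).foldr (· ++ ·) [] ++ [false, true]

/-- A fixed polynomial-time computable and invertible encoding of finite tuples of strings. -/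
def encodeTuple (l : List Str) : Str := (l.map encStr).foldr (· ++ ·) []

/-- The identity `FinEncoding` of binary strings over alphabet `Bool`. -/
def strEnc : Encoding Str Bool where
  encode := id
  decode := fun l => some l
  decode_encode := fun _ => rfl

/-- Encoding of `Bool`. -/
def boolEnc : Encoding Bool Bool := Computability.encodingBoolBool

open scoped Classical in
/-- Characteristic function of a language. -/
noncomputable def chi (A : Set Str) (x : Str) : Bool := decide (x ∈ A)

/-- A language is in `P` if its characteristic function is computable in polynomial time. -/
def InP (A : Set Str) : Prop := Nonempty (Turing.TM2ComputableInPolyTime strEnc.encode boolEnc.encode (chi A))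

/-- `FP`: total string functions computable in polynomial time. -/
def FP (f : Str → Str) : Prop := Nonempty (Turing.TM2ComputableInPolyTime strEnc.encode strEnc.encode f)

/-- A (k+1)-ary relation on strings is polynomial-time decidable if some polynomial-time
computable function decides it on encoded tuples. -/
def PTimeRel (R : Str → List Str → Bool) : Prop :=
  ∃ g : Str → Bool, Nonempty (Turing.TM2ComputableInPolyTime strEnc.encode boolEnc.encode g) ∧
    ∀ x l, g (encodeTuple (x :: l)) = R x l

/-- Alternating bounded quantifiers: `altSat k true m P` means
`∃ y₁ ∀ y₂ ⋯ Q y_k, P [y₁,…,y_k]` with all `|yᵢ| ≤ m`. -/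
def altSat : ℕ → Bool → ℕ → (List Str → Prop) → Prop
  | 0, _, _, P => P []
  | k + 1, true, m, P => ∃ y : Str, y.length ≤ m ∧ altSat k false m (fun l => P (y :: l))
  | k + 1, false, m, P => ∀ y : Str, y.length ≤ m → altSat k true m (fun l => P (y :: l))

/-- The class `Σₖᵖ` of the polynomial hierarchy (`NP = SigmaP 1`). -/
def SigmaP (k : ℕ) : Set (Set Str) :=
  {L | ∃ p : Polynomial ℕ, ∃ R : Str → List Str → Bool, PTimeRel R ∧
    ∀ x, x ∈ L ↔ altSat k true (p.eval x.length) (fun l => R x l = true)}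

/-- `C`-immunity for an arbitrary class `C` of languages. -/
def Immune (C : Set (Set Str)) (S : Set Str) : Prop :=
  S.Infinite ∧ ∀ T, T ⊆ S → T ∈ C → T.Finite

/-- `Σₖᵖ`-immune sets. -/
def SigmaImmune (k : ℕ) (S : Set Str) : Prop := Immune (SigmaP k) S

/-- `Σₖᵖ`-simple sets. -/
def SigmaSimple (k : ℕ) (S : Set Str) : Prop := S ∈ SigmaP k ∧ SigmaImmune k Sᶜ

/-- Polynomially bounded partial function. -/
def PolyBounded (f : Str → Option Str) : Prop :=
  ∃ p : Polynomial ℕ, ∀ x y, f x = some y → y.length ≤ p.eval x.length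

/-- The graph of a partial function, as a set of encoded pairs. -/
def StrGraph (f : Str → Option Str) : Set Str :=
  {z | ∃ x y, f x = some y ∧ z = encodeTuple [x, y]}

/-- `ΣₖSV`: single-valued partial functions, polynomially bounded, with graph in `Σₖᵖ`. -/
def SigmaSV (k : ℕ) (f : Str → Option Str) : Prop :=
  PolyBounded f ∧ StrGraph f ∈ SigmaP k

/-- A `Σₖᵖ`-m-quasireduction from `A` to `B`. -/
def QuasiRed (k : ℕ) (f : Str → Option Str) (A B : Set Str) : Prop :=
  SigmaSV k f ∧ {x | f x ≠ none}.Infinite ∧ ∀ x y, f x = some y → (x ∈ A ↔ y ∈ B)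

/-- Order on strings: first by length, then lexicographically. -/
def StrLt (x y : Str) : Prop :=
  x.length < y.length ∨ (x.length = y.length ∧ List.Lex (· < ·) x y)

def StrLe (x y : Str) : Prop := StrLt x y ∨ x = y

/-- Strongly `Σₖᵖ`-immune sets: every quasireduction from `S` is almost one-to-one on `S`. -/
def StronglySigmaImmune (k : ℕ) (S : Set Str) : Prop :=
  S.Infinite ∧ ∀ B : Set Str, ∀ f : Str → Option Str, QuasiRed k f S B →
    {p : Str × Str | p.1 ∈ S ∧ p.2 ∈ S ∧ f p.1 ≠ none ∧ f p.2 ≠ none ∧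
      StrLt p.1 p.2 ∧ f p.1 = f p.2}.Finite

/-- Honest total function: `|x| ≤ p(|f(x)|)`. -/
def Honest (f : Str → Str) : Prop := ∃ p : Polynomial ℕ, ∀ x, x.length ≤ p.eval (f x).length

/-- Honest polynomial-time many-one reduction. -/
def HPmRed (A B : Set Str) : Prop :=
  ∃ f : Str → Str, FP f ∧ Honest f ∧ ∀ x, x ∈ A ↔ f x ∈ B

/-- Honest injective polynomial-time many-one (1-) reduction. -/
def HP1Red (A B : Set Str) : Prop :=
  ∃ f : Str → Str, FP f ∧ Honest f ∧ Function.Injective f ∧ ∀ x, x ∈ A ↔ f x ∈ B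

/-- The map `x ↦ ⟨F x⟩` is polynomial-time computable. -/
def TupleFP (F : Str → List Str) : Prop := FP (fun x => encodeTuple (F x))

/-- Componentwise honest tuple function. -/
def CwHonest (F : Str → List Str) : Prop :=
  ∃ p : Polynomial ℕ, ∀ x, ∀ y ∈ F x, x.length ≤ p.eval y.length

/-- Honest polynomial-time conjunctive reduction. -/
def HPcRed (A B : Set Str) : Prop :=
  ∃ F : Str → List Str, TupleFP F ∧ (∀ x, F x ≠ []) ∧ CwHonest F ∧
    ∀ x, x ∈ A ↔ ∀ y ∈ F x, y ∈ B

/-- Honest polynomial-time disjunctive reduction. -/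
def HPdRed (A B : Set Str) : Prop :=
  ∃ F : Str → List Str, TupleFP F ∧ (∀ x, F x ≠ []) ∧ CwHonest F ∧
    ∀ x, x ∈ A ↔ ∃ y ∈ F x, y ∈ B

/-! Forcing conditions and genericity. -/

/-- A forcing condition: a finite partial function from strings to bits, represented
canonically as a list of (string, value) pairs with strictly increasing keys. -/
abbrev Cond : Type := List (Str × Bool)

/-- Well-formedness: the domain is listed in strictly increasing order. -/
def WFCond (σ : Cond) : Prop := List.Pairwise (fun a b => StrLt a.1 b.1) σ

/-- Encoding of a condition as a string: the list of its domain in increasing order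
together with the corresponding values. -/
def encodeCond (σ : Cond) : Str :=
  encodeTuple [encodeTuple (σ.map Prod.fst), σ.map Prod.snd]

/-- `τ` extends `σ`. -/
def CondExt (σ τ : Cond) : Prop := ∀ p ∈ σ, p ∈ τ

/-- A set `A` extends a condition `σ`. -/
def SetExt (A : Set Str) (σ : Cond) : Prop := ∀ p ∈ σ, (p.1 ∈ A ↔ p.2 = true)

/-- A set `S` of conditions is dense along `A`. -/
def DenseAlong (S : Set Cond) (A : Set Str) : Prop :=
  ∀ σ, WFCond σ → SetExt A σ → ∃ τ ∈ S, WFCond τ ∧ CondExt σ τ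

/-- `A` meets a set `S` of conditions. -/
def Meets (A : Set Str) (S : Set Cond) : Prop := ∃ σ ∈ S, WFCond σ ∧ SetExt A σ

/-- `Σₖᵖ`-generic sets. -/
def SigmaGeneric (k : ℕ) (A : Set Str) : Prop :=
  ∀ S : Set Cond, {z | ∃ σ ∈ S, WFCond σ ∧ z = encodeCond σ} ∈ SigmaP k →
    DenseAlong S A → Meets A S

/-! Arrays and hyperimmunity. -/

/-- `(f, D)` is a `Σₖᵖ`-array: `f ∈ ΣₖSV` has infinite domain and, on its domain,
`f s` is the canonical encoding of the finite nonempty set `D s`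
(listed in increasing order); off the domain, `D s = ∅`. -/
def IsSigmaArray (k : ℕ) (f : Str → Option Str) (D : Str → List Str) : Prop :=
  SigmaSV k f ∧ {s | f s ≠ none}.Infinite ∧
    (∀ s, f s ≠ none →
      D s ≠ [] ∧ List.Pairwise StrLt (D s) ∧ f s = some (encodeTuple (D s))) ∧
    (∀ s, f s = none → D s = [])

/-- Honest array: componentwise honest supporting function. -/
def ArrayHonest (f : Str → Option Str) (D : Str → List Str) : Prop :=
  ∃ q : Polynomial ℕ, ∀ s, f s ≠ none → ∀ x ∈ D s, s.length ≤ q.eval x.length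

/-- Eventually disjoint array. -/
def ArrayEvDisjoint (f : Str → Option Str) (D : Str → List Str) : Prop :=
  ∀ x, f x ≠ none → ∃ y, f y ≠ none ∧ StrLe x y ∧ (∀ a ∈ D x, a ∉ D y) ∧
    (∀ a ∈ D x, ∀ b ∈ D y, StrLt a b)

/-- The array intersects `X`. -/
def ArrayIntersects (f : Str → Option Str) (D : Str → List Str) (X : Set Str) : Prop :=
  ∀ s, f s ≠ none → ∃ x ∈ D s, x ∈ X

/-- Honestly `Σₖᵖ`-hyperimmune sets. -/
def HonestlySigmaHyperimmune (k : ℕ) (S : Set Str) : Prop :=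
  S.Infinite ∧ ¬ ∃ f D, IsSigmaArray k f D ∧ ArrayHonest f D ∧
    ArrayEvDisjoint f D ∧ ArrayIntersects f D S

/-! Selectivity. -/

/-- Total functions in `ΣₖSV`. -/
def SigmaSVt (k : ℕ) (g : Str → Str) : Prop := SigmaSV k (fun x => some (g x))

/-- `ΣₖSVₜ`-selective sets. -/
def SVtSelective (k : ℕ) (S : Set Str) : Prop :=
  ∃ f : Str → Str → Str,
    (∃ g : Str → Str, SigmaSVt k g ∧ ∀ x y, g (encodeTuple [x, y]) = f x y) ∧
    ∀ x y, (f x y = x ∨ f x y = y) ∧ (({x, y} : Set Str) ∩ S ≠ ∅ → f x y ∈ S)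

/-- `P`-selective sets. -/
def PSelective (S : Set Str) : Prop :=
  ∃ f : Str → Str → Str,
    (∃ g : Str → Str, FP g ∧ ∀ x y, g (encodeTuple [x, y]) = f x y) ∧
    ∀ x y, (f x y = x ∨ f x y = y) ∧ (({x, y} : Set Str) ∩ S ≠ ∅ → f x y ∈ S)

/-! Exponential and subexponential time. -/

/-- A language is in `EXP` if its characteristic function is computable
within time `2^(n^c + c)` for some `c`. -/
def InEXP (A : Set Str) : Prop :=
  ∃ c : ℕ, ∃ h : Turing.TM2ComputableInTime strEnc.encode boolEnc.encode (chi A),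
    ∀ n, h.time n ≤ 2 ^ (n ^ c + c)

/-- A language is in `SUBEXP` if for every `c ≥ 1` its characteristic function is
computable within time `2^(n^(1/c))`. -/
def InSUBEXP (A : Set Str) : Prop :=
  ∀ c : ℕ, 1 ≤ c → ∃ h : Turing.TM2ComputableInTime strEnc.encode boolEnc.encode (chi A),
    ∀ n, (h.time n : ℝ) ≤ 2 ^ ((n : ℝ) ^ (1 / (c : ℝ)))

/-- The alternating tower: `2̂₀ = 1`, `2̂_{n+1} = 2^(2^(2̂ₙ))`. -/
def towHat : ℕ → ℕ
  | 0 => 1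
  | n + 1 => 2 ^ (2 ^ towHat n)

/-! Truth-table style reductions. -/

/-- Polynomial-time computability of a truth-table evaluator `α : Σ* × {0,1} → {0,1}`
(on encoded pairs). -/
def FPEval1 (α : Str → Bool → Bool) : Prop :=
  ∃ g : Str → Str, FP g ∧ ∀ x b, g (encodeTuple [x, [b]]) = [α x b]

/-- Polynomial-time computability of `α : Σ* × {0,1}² → {0,1}` (on encoded tuples). -/
def FPEval2 (α : Str → Bool → Bool → Bool) : Prop :=
  ∃ g : Str → Str, FP g ∧ ∀ x b₁ b₂, g (encodeTuple [x, [b₁, b₂]]) = [α x b₁ b₂]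

/-- `P`-1tt-reduction from `A` to `B` via `(f, α)`. -/
def P1ttRed (A B : Set Str) : Prop :=
  ∃ f : Str → Str, ∃ α : Str → Bool → Bool, FP f ∧ FPEval1 α ∧
    ∀ x, x ∈ A ↔ α x (chi B (f x)) = true

/-- Honest `P`-1tt-reduction. -/
def HP1ttRed (A B : Set Str) : Prop :=
  ∃ f : Str → Str, ∃ α : Str → Bool → Bool, FP f ∧ FPEval1 α ∧ Honest f ∧
    ∀ x, x ∈ A ↔ α x (chi B (f x)) = true

/-! Almost immunity, levelability, and the operator `U`. -/

/-- Almost `C`-immune: union of a set in `C` and a `C`-immune set. -/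
def AlmostImmune (C : Set (Set Str)) (S : Set Str) : Prop :=
  ∃ A ∈ C, ∃ B, Immune C B ∧ S = A ∪ B

/-- The class `P`. -/
def Pclass : Set (Set Str) := {A | InP A}

/-- `P`-levelable: infinite and not almost `P`-immune. -/
def PLevelable (S : Set Str) : Prop := S.Infinite ∧ ¬ AlmostImmune Pclass S

/-- Almost `Σₖᵖ`-simple sets. -/
def AlmostSigmaSimple (k : ℕ) (S : Set Str) : Prop :=
  S.Infinite ∧ S ∈ SigmaP k ∧
    ∃ A ∈ SigmaP k, ∃ B, Immune (SigmaP k) B ∧ Sᶜ = A ∪ B ∧ (B \ A).Infinite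

/-- `Σₖᵖ`-pseudosimple sets. -/
def SigmaPseudosimple (k : ℕ) (S : Set Str) : Prop :=
  ∃ A : Set Str, A.Infinite ∧ A ∈ SigmaP k ∧ A ⊆ Sᶜ ∧ SigmaSimple k (S ∪ A)

/-- The unambiguity operator `U` on a class `C`. -/
def UClass (C : Set (Set Str)) : Set (Set Str) :=
  {A | ∃ f : Str → Option Str, PolyBounded f ∧ A = {x | f x ≠ none} ∧ StrGraph f ∈ C}

theorem Set.compl_mem_of_eq_compl_image {α : Type*} {C : Set (Set α)}
    (hC : C = compl '' C) {X : Set α} (hX : X ∈ C) : Xᶜ ∈ C :=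
  hC ▸ Set.mem_image_of_mem compl hX

theorem Set.compl_inter_compl_eq_diff_of_compl_eq_union {α : Type*} {S A B : Set α}
    (h : Sᶜ = A ∪ B) : Sᶜ ∩ Aᶜ = B \ A := by
  rw [← Set.sdiff_eq, h, Set.union_sdiff_left]

theorem stmt9_general (C : Set (Set Str))
    (hint : ∀ A B : Set Str, A ∈ C → B ∈ C → A ∩ B ∈ C)
    (hsimple : ∃ S : Set Str, S.Infinite ∧ S ∈ C ∧
      ∃ A ∈ C, ∃ B : Set Str, Immune C B ∧ Sᶜ = A ∪ B ∧ (B \ A).Infinite) :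
    C ≠ (fun A : Set Str => Aᶜ) '' C := by
  intro hCC
  obtain ⟨S, -, hSC, A, hAC, B, hBimm, hcomp, hBAinf⟩ := hsimple
  have hBA : B \ A ∈ C := by
    rw [← Set.compl_inter_compl_eq_diff_of_compl_eq_union hcomp]
    exact hint _ _ (Set.compl_mem_of_eq_compl_image hCC hSC)
      (Set.compl_mem_of_eq_compl_image hCC hAC)
  exact hBAinf (hBimm.2 _ Set.sdiff_subset hBA)

/-- if a class `C` closed under finite variations, binary unions and
binary intersections has an almost `C`-simple set, then `C ≠ co-C`. -/
theorem stmt9 (C : Set (Set Str))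
    (hfv : ∀ A B : Set Str, A ∈ C → (symmDiff A B).Finite → B ∈ C)
    (hun : ∀ A B : Set Str, A ∈ C → B ∈ C → A ∪ B ∈ C)
    (hint : ∀ A B : Set Str, A ∈ C → B ∈ C → A ∩ B ∈ C)
    (hsimple : ∃ S : Set Str, S.Infinite ∧ S ∈ C ∧
      ∃ A ∈ C, ∃ B : Set Str, Immune C B ∧ Sᶜ = A ∪ B ∧ (B \ A).Infinite) :
    C ≠ (fun A : Set Str => Aᶜ) '' C :=
  stmt9_general C hint hsimple
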